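/- arXiv:2604.13086 — 2 statements merged into one kernel-verified Lean document; each statement's English description precedes it below -/
import Mathlib

section
/- Let (x_n) be a complex-valued sequence, r ∈ (0,1), L ∈ ℂ, k ∈ ℕ, and let T be the right-shift operator. If lim_{N→∞} E_{n≤N}^{Bin(r)}(x_n) = L, then lim_{N→∞} E_{n≤N}^{Bin(r)}((T^k x)_n) = L. -/
open Finset Filter

/-- The `N`-th `r`-binomial average of a complex sequence. -/
noncomputable def binAvg (r : ℝ) (N : ℕ) (x : ℕ → ℂ) : ℂ :=
  ∑ n ∈ Finset.range (N + 1), (N.choose n : ℂ) * (r : ℂ) ^ n * ((1 : ℂ) - r) ^ (N - n) * x n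

/-- The right-shift operator on sequences. -/
def shiftOp (x : ℕ → ℂ) : ℕ → ℂ := fun n => if n = 0 then 0 else x (n - 1)

lemma binAvg_shift_rec (r : ℝ) (x : ℕ → ℂ) (N : ℕ) :
    binAvg r (N + 1) (shiftOp x)
      = (1 - (r : ℂ)) * binAvg r N (shiftOp x) + (r : ℂ) * binAvg r N x := by
  unfold binAvg
  rw [Finset.sum_range_succ' _ (N + 1)]
  simp only [shiftOp, Nat.add_sub_cancel, Nat.succ_sub_succ, Nat.sub_zero, Nat.succ_ne_zero,
    if_false, if_pos rfl, ite_true, ite_false, mul_zero, add_zero]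
  have step1 : ∀ i : ℕ, ((N + 1).choose (i + 1) : ℂ) * (r : ℂ) ^ (i + 1) * ((1 : ℂ) - r) ^ (N - i) * x i
      = (N.choose (i + 1) : ℂ) * (r : ℂ) ^ (i + 1) * ((1 : ℂ) - r) ^ (N - i) * x i
        + (r : ℂ) * ((N.choose i : ℂ) * (r : ℂ) ^ i * ((1 : ℂ) - r) ^ (N - i) * x i) := by
    intro i
    rw [Nat.choose_succ_succ]
    push_cast
    ring
  rw [Finset.sum_congr rfl fun i _ => step1 i, Finset.sum_add_distrib, ← Finset.mul_sum]
  congr 1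
  rw [Finset.sum_range_succ, Nat.choose_succ_self]
  rw [Finset.sum_range_succ' (fun n => ((N.choose n : ℂ)) * (r:ℂ)^n * ((1:ℂ)-r)^(N-n) * (if n = 0 then 0 else x (n-1))) N]
  simp only [Nat.cast_zero, zero_mul, mul_zero, add_zero, Nat.succ_ne_zero, if_false, ite_false,
    Nat.add_sub_cancel, Nat.succ_sub_succ, Nat.sub_zero, if_pos rfl, ite_true]
  rw [Finset.mul_sum]
  refine Finset.sum_congr rfl fun i hi => ?_
  rw [Finset.mem_range] at hi
  have h2 : N - i = (N - (i + 1)) + 1 := by omega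
  rw [h2, pow_succ]
  ring

lemma binAvg_shift_closed (r : ℝ) (x : ℕ → ℂ) (N : ℕ) :
    binAvg r N (shiftOp x)
      = ∑ j ∈ range N, (r : ℂ) * ((1 : ℂ) - r) ^ (N - 1 - j) * binAvg r j x := by
  induction N with
  | zero => simp [binAvg, shiftOp]
  | succ N ih =>
      rw [binAvg_shift_rec, ih, Finset.sum_range_succ, Finset.mul_sum]
      simp only [Nat.add_sub_cancel, Nat.sub_self, pow_zero, mul_one]
      congr 1
      refine Finset.sum_congr rfl fun j hj => ?_
      rw [Finset.mem_range] at hj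
      have : N - j = (N - 1 - j) + 1 := by omega
      rw [this, pow_succ]
      ring

lemma geom_null (s : ℝ) (hs0 : 0 ≤ s) (hs1 : s < 1) (C : ℕ → ℂ)
    (hC : Tendsto C atTop (nhds 0)) :
    Tendsto (fun N => ∑ j ∈ range N, ((s : ℂ)) ^ (N - 1 - j) * C j) atTop (nhds 0) := by
  rw [Metric.tendsto_atTop]
  intro ε hε
  have hr : 0 < 1 - s := by linarith
  -- choose M with ‖C j‖ ≤ ε * (1 - s) / 2 for j ≥ M
  have hC' := Metric.tendsto_atTop.1 hC (ε * (1 - s) / 2) (by positivity)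
  obtain ⟨M, hM⟩ := hC'
  set K : ℝ := ∑ j ∈ range M, ‖C j‖ with hK
  have hK0 : 0 ≤ K := Finset.sum_nonneg fun j _ => norm_nonneg _
  -- choose N₁ ≥ M with K * s^(N - M) < ε/2 for N ≥ N₁
  have hpow : Tendsto (fun n : ℕ => K * s ^ n) atTop (nhds 0) := by
    simpa using (tendsto_pow_atTop_nhds_zero_of_lt_one hs0 hs1).const_mul K
  obtain ⟨P, hP⟩ := Metric.tendsto_atTop.1 hpow (ε / 2) (by positivity)
  refine ⟨M + P, fun N hN => ?_⟩
  rw [dist_zero_right]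
  have hMN : M ≤ N := le_trans (Nat.le_add_right _ _) hN
  have hbound : ‖∑ j ∈ range N, ((s : ℂ)) ^ (N - 1 - j) * C j‖
      ≤ ∑ j ∈ range N, s ^ (N - 1 - j) * ‖C j‖ := by
    refine le_trans (norm_sum_le _ _) (Finset.sum_le_sum fun j _ => ?_)
    rw [norm_mul, norm_pow, Complex.norm_real, Real.norm_eq_abs, abs_of_nonneg hs0]
  refine lt_of_le_of_lt hbound ?_
  rw [← Finset.sum_range_add_sum_Ico _ hMN]
  have h1 : ∑ j ∈ range M, s ^ (N - 1 - j) * ‖C j‖ ≤ s ^ (N - M) * K := by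
    rw [hK, Finset.mul_sum]
    refine Finset.sum_le_sum fun j hj => ?_
    rw [Finset.mem_range] at hj
    have : s ^ (N - 1 - j) ≤ s ^ (N - M) := by
      apply pow_le_pow_of_le_one hs0 hs1.le
      omega
    nlinarith [norm_nonneg (C j), pow_nonneg hs0 (N - 1 - j), pow_nonneg hs0 (N - M)]
  have h2 : ∑ j ∈ Finset.Ico M N, s ^ (N - 1 - j) * ‖C j‖ ≤ ε / 2 := by
    have step : ∀ j ∈ Finset.Ico M N, s ^ (N - 1 - j) * ‖C j‖ ≤ s ^ (N - 1 - j) * (ε * (1 - s) / 2) := by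
      intro j hj
      rw [Finset.mem_Ico] at hj
      have := hM j hj.1
      rw [dist_zero_right] at this
      exact mul_le_mul_of_nonneg_left this.le (pow_nonneg hs0 _)
    refine le_trans (Finset.sum_le_sum step) ?_
    rw [← Finset.sum_mul]
    have hsum : ∑ j ∈ Finset.Ico M N, s ^ (N - 1 - j) ≤ 1 / (1 - s) := by
      calc ∑ j ∈ Finset.Ico M N, s ^ (N - 1 - j)
          ≤ ∑ j ∈ range N, s ^ (N - 1 - j) := by
            refine Finset.sum_le_sum_of_subset_of_nonneg ?_ fun i _ _ => pow_nonneg hs0 _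
            rw [Finset.range_eq_Ico]
            exact Finset.Ico_subset_Ico (Nat.zero_le M) le_rfl
        _ = ∑ i ∈ range N, s ^ i := Finset.sum_range_reflect (fun i => s ^ i) N
        _ = (1 - s ^ N) / (1 - s) := by
            rw [geom_sum_eq hs1.ne]
            rw [div_eq_div_iff (sub_ne_zero.mpr hs1.ne) (sub_ne_zero.mpr (by linarith : (1:ℝ) ≠ s))]
            ring
        _ ≤ 1 / (1 - s) := by
            gcongr
            nlinarith [pow_nonneg hs0 N]
    calc (∑ j ∈ Finset.Ico M N, s ^ (N - 1 - j)) * (ε * (1 - s) / 2)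
        ≤ (1 / (1 - s)) * (ε * (1 - s) / 2) := by
          apply mul_le_mul_of_nonneg_right hsum (by positivity)
      _ = ε / 2 := by field_simp
  have h3 : s ^ (N - M) * K < ε / 2 := by
    have := hP (N - M) (by omega)
    rw [dist_zero_right] at this
    calc s ^ (N - M) * K = K * s ^ (N - M) := by ring
      _ ≤ |K * s ^ (N - M)| := le_abs_self _
      _ < ε / 2 := by rwa [Real.norm_eq_abs] at this
  linarith

lemma binAvg_shift_tendsto (r : ℝ) (hr : r ∈ Set.Ioo (0:ℝ) 1) (x : ℕ → ℂ) (L : ℂ)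
    (h : Tendsto (fun N => binAvg r N x) atTop (nhds L)) :
    Tendsto (fun N => binAvg r N (shiftOp x)) atTop (nhds L) := by
  obtain ⟨hr0, hr1⟩ := hr
  set sC : ℂ := ((1 - r : ℝ) : ℂ) with hsC
  have hcast : (1 : ℂ) - (r : ℂ) = sC := by rw [hsC]; push_cast; ring
  have hrC0 : (r : ℂ) ≠ 0 := by exact_mod_cast ne_of_gt hr0
  have hne : sC ≠ 1 := by
    rw [hsC]
    intro hcon
    have : (1 - r : ℝ) = 1 := by exact_mod_cast hcon
    linarith
  have hgeom : ∀ N : ℕ, (r : ℂ) * ∑ i ∈ range N, sC ^ i = 1 - sC ^ N := by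
    intro N
    rw [geom_sum_eq hne]
    have hd : sC - 1 = -(r : ℂ) := by rw [hsC]; push_cast; ring
    rw [hd, div_neg, mul_neg, ← mul_div_assoc, mul_div_cancel_left₀ _ hrC0]
    ring
  have key_eq : ∀ N : ℕ, binAvg r N (shiftOp x)
      = (r : ℂ) * (∑ j ∈ range N, sC ^ (N - 1 - j) * (binAvg r j x - L))
        + L * (1 - sC ^ N) := by
    intro N
    rw [binAvg_shift_closed]
    calc ∑ j ∈ range N, (r : ℂ) * ((1 : ℂ) - r) ^ (N - 1 - j) * binAvg r j x
        = (r : ℂ) * (∑ j ∈ range N, sC ^ (N - 1 - j) * (binAvg r j x - L))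
            + L * ((r : ℂ) * ∑ j ∈ range N, sC ^ (N - 1 - j)) := by
          rw [Finset.mul_sum, Finset.mul_sum, Finset.mul_sum, ← Finset.sum_add_distrib]
          refine Finset.sum_congr rfl fun j _ => ?_
          rw [hcast]
          ring
      _ = _ := by
          rw [Finset.sum_range_reflect (fun i => sC ^ i) N, hgeom]
  have hC : Tendsto (fun N => binAvg r N x - L) atTop (nhds 0) := by
    simpa using h.sub_const L
  have hG : Tendsto (fun N => ∑ j ∈ range N, sC ^ (N - 1 - j) * (binAvg r j x - L))
      atTop (nhds 0) := geom_null (1 - r) (by linarith) (by linarith) _ hC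
  have hpow : Tendsto (fun N : ℕ => sC ^ N) atTop (nhds 0) := by
    apply tendsto_pow_atTop_nhds_zero_of_norm_lt_one
    rw [hsC, Complex.norm_real, Real.norm_eq_abs, abs_of_nonneg (by linarith)]
    linarith
  have t1 : Tendsto (fun N => (r : ℂ) * (∑ j ∈ range N, sC ^ (N - 1 - j) * (binAvg r j x - L)))
      atTop (nhds 0) := by simpa using hG.const_mul (r : ℂ)
  have t2 : Tendsto (fun N : ℕ => L * (1 - sC ^ N)) atTop (nhds L) := by
    have := ((tendsto_const_nhds (x := (1:ℂ)) (f := atTop (α := ℕ))).sub hpow).const_mul L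
    simpa using this
  have := t1.add t2
  rw [zero_add] at this
  simpa only [← key_eq] using this

theorem stmt_5 (r : ℝ) (hr : r ∈ Set.Ioo (0:ℝ) 1) (x : ℕ → ℂ) (L : ℂ) (k : ℕ)
    (h : Tendsto (fun N => binAvg r N x) atTop (nhds L)) :
    Tendsto (fun N => binAvg r N (shiftOp^[k] x)) atTop (nhds L) := by
  induction k generalizing x with
  | zero => simpa using h
  | succ k ih =>
      have h' := binAvg_shift_tendsto r hr x L h
      have := ih (shiftOp x) h'
      simpa [Function.iterate_succ_apply] using this
end

section
/- Let (λ_n) be a sequence of complex numbers with ∑_{n=0}^∞ |λ_n| < ∞, let r ∈ (0,1), L ∈ ℂ, and let (x_n) be a complex-valued sequence such that lim_{N→∞} E_{n≤N}^{Bin(r)}(x_n) = L. Then lim_{N→∞} E_{n≤N}^{Bin(r)}(∑_{k=0}^n λ_k x_{n-k}) = L · ∑_{n=0}^∞ λ_n. -/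
open Finset Filter

lemma shiftOp_iterate (x : ℕ → ℂ) (k n : ℕ) :
    shiftOp^[k] x n = if n < k then 0 else x (n - k) := by
  induction k generalizing n with
  | zero => simp
  | succ k ih =>
    rw [Function.iterate_succ_apply']
    cases n with
    | zero => simp [shiftOp]
    | succ m =>
      simp only [shiftOp, Nat.succ_ne_zero, if_false, Nat.succ_sub_one, ih]
      by_cases hm : m < k
      · simp [hm, Nat.succ_lt_succ hm]
      · rw [if_neg hm, if_neg (by omega)]
        congr 1
        omega

lemma binAvg_succ (r : ℝ) (N : ℕ) (z : ℕ → ℂ) :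
    binAvg r (N + 1) z
      = (1 - (r : ℂ)) * binAvg r N z + (r : ℂ) * binAvg r N (fun n => z (n + 1)) := by
  unfold binAvg
  rw [Finset.sum_range_succ' (fun n => ((N+1).choose n : ℂ) * (r:ℂ)^n * ((1:ℂ)-r)^(N+1-n) * z n)]
  have pascal : ∀ m ∈ Finset.range (N + 1),
      (((N+1).choose (m+1) : ℂ) * (r:ℂ)^(m+1) * ((1:ℂ)-r)^(N+1-(m+1)) * z (m+1))
      = ((N.choose (m+1) : ℂ) * (r:ℂ)^(m+1) * ((1:ℂ)-r)^(N-(m+1)+1) * z (m+1))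
        + (r:ℂ) * ((N.choose m : ℂ) * (r:ℂ)^m * ((1:ℂ)-r)^(N-m) * z (m+1)) := by
    intro m hm
    rw [Finset.mem_range] at hm
    have h1 : (N+1).choose (m+1) = N.choose (m+1) + N.choose m := by
      rw [Nat.choose_succ_succ', Nat.add_comm]
    have h2 : N + 1 - (m + 1) = N - m := by omega
    by_cases hmN : m = N
    · subst hmN
      simp [Nat.choose_succ_self, h2]
      ring
    · have h3 : N - (m+1) + 1 = N - m := by omega
      rw [h1, h2, h3]
      push_cast
      ring
  rw [Finset.sum_congr rfl pascal, Finset.sum_add_distrib, ← Finset.mul_sum]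
  rw [Finset.mul_sum (Finset.range (N+1))
    (fun n => (N.choose n : ℂ) * (r:ℂ)^n * ((1:ℂ)-r)^(N-n) * z n) (1 - (r:ℂ))]
  rw [Finset.sum_range_succ' (fun n => (1 - (r:ℂ)) * ((N.choose n : ℂ) * (r:ℂ)^n * ((1:ℂ)-r)^(N-n) * z n))]
  have congr2 : ∀ m ∈ Finset.range N,
      (1 - (r:ℂ)) * ((N.choose (m+1) : ℂ) * (r:ℂ)^(m+1) * ((1:ℂ)-r)^(N-(m+1)) * z (m+1))
      = ((N.choose (m+1) : ℂ) * (r:ℂ)^(m+1) * ((1:ℂ)-r)^(N-(m+1)+1) * z (m+1)) := by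
    intro m hm
    ring
  rw [Finset.sum_congr rfl congr2]
  have split : ∑ m ∈ Finset.range (N+1),
      ((N.choose (m+1) : ℂ) * (r:ℂ)^(m+1) * ((1:ℂ)-r)^(N-(m+1)+1) * z (m+1))
      = ∑ m ∈ Finset.range N,
      ((N.choose (m+1) : ℂ) * (r:ℂ)^(m+1) * ((1:ℂ)-r)^(N-(m+1)+1) * z (m+1)) := by
    rw [Finset.sum_range_succ, Nat.choose_succ_self]
    simp
  rw [split]
  simp only [Nat.choose_zero_right, pow_zero, Nat.sub_zero]
  ring

/-- Limit of a sequence satisfying the convex-combination recursion driven by `b → L`. -/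
lemma tendsto_of_rec (r : ℝ) (hr0 : 0 < r) (hr1 : r < 1) (a b : ℕ → ℂ) (L : ℂ)
    (hab : ∀ N, a (N + 1) = (1 - (r : ℂ)) * a N + (r : ℂ) * b N)
    (hb : Tendsto b atTop (nhds L)) : Tendsto a atTop (nhds L) := by
  rw [Metric.tendsto_atTop] at hb ⊢
  intro ε hε
  obtain ⟨N₀, hN₀⟩ := hb (ε / 4) (by linarith)
  have key : ∀ m, ‖a (N₀ + m) - L‖ ≤ (1 - r) ^ m * ‖a N₀ - L‖ + ε / 4 := by
    intro m
    induction m with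
    | zero => simp; linarith
    | succ m ih =>
      have hrec : a (N₀ + m + 1) - L = (1 - (r:ℂ)) * (a (N₀ + m) - L) + (r:ℂ) * (b (N₀ + m) - L) := by
        rw [hab]; ring
      have hbm : ‖b (N₀ + m) - L‖ ≤ ε / 4 := by
        have := hN₀ (N₀ + m) (Nat.le_add_right _ _)
        rw [dist_eq_norm] at this
        linarith
      have h1r : (0:ℝ) ≤ 1 - r := by linarith
      calc ‖a (N₀ + (m+1)) - L‖ = ‖(1 - (r:ℂ)) * (a (N₀ + m) - L) + (r:ℂ) * (b (N₀ + m) - L)‖ := by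
            rw [← hrec]; ring_nf
        _ ≤ ‖(1 - (r:ℂ)) * (a (N₀ + m) - L)‖ + ‖(r:ℂ) * (b (N₀ + m) - L)‖ := norm_add_le _ _
        _ = (1 - r) * ‖a (N₀ + m) - L‖ + r * ‖b (N₀ + m) - L‖ := by
            rw [norm_mul, norm_mul]
            congr 2
            · rw [show (1 - (r:ℂ)) = ((1 - r : ℝ) : ℂ) by push_cast; ring,
                Complex.norm_real, Real.norm_of_nonneg h1r]
            · rw [Complex.norm_real, Real.norm_of_nonneg hr0.le]
        _ ≤ (1 - r) * ((1 - r) ^ m * ‖a N₀ - L‖ + ε / 4) + r * (ε / 4) := by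
            apply add_le_add
            · exact mul_le_mul_of_nonneg_left ih h1r
            · exact mul_le_mul_of_nonneg_left hbm hr0.le
        _ = (1 - r) ^ (m + 1) * ‖a N₀ - L‖ + ε / 4 := by ring
  have htend : Tendsto (fun m => (1 - r) ^ m * ‖a N₀ - L‖) atTop (nhds 0) := by
    rw [show (0:ℝ) = 0 * ‖a N₀ - L‖ by ring]
    apply Tendsto.mul_const
    exact tendsto_pow_atTop_nhds_zero_of_lt_one (by linarith) (by linarith)
  rw [Metric.tendsto_atTop] at htend
  obtain ⟨m₁, hm₁⟩ := htend (ε / 4) (by linarith)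
  refine ⟨N₀ + m₁, fun n hn => ?_⟩
  obtain ⟨m, rfl⟩ : ∃ m, n = N₀ + m := ⟨n - N₀, by omega⟩
  have hm : m₁ ≤ m := by omega
  have h1 := key m
  have h2 := hm₁ m hm
  rw [Real.dist_eq] at h2
  have h3 : (1 - r) ^ m * ‖a N₀ - L‖ < ε / 4 := by
    have : (0:ℝ) ≤ (1 - r) ^ m * ‖a N₀ - L‖ :=
      mul_nonneg (pow_nonneg (by linarith) _) (norm_nonneg _)
    rw [abs_of_nonneg (by linarith)] at h2
    linarith
  rw [dist_eq_norm]
  linarith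

theorem stmt_7 (l : ℕ → ℂ) (hl : Summable fun n => ‖l n‖) (r : ℝ) (hr : r ∈ Set.Ioo (0:ℝ) 1)
    (L : ℂ) (x : ℕ → ℂ) (h : Tendsto (fun N => binAvg r N x) atTop (nhds L)) :
    Tendsto (fun N => binAvg r N (fun n => ∑ k ∈ Finset.range (n + 1), l k * x (n - k)))
      atTop (nhds (L * ∑' n, l n)) := by
  obtain ⟨hr0, hr1⟩ := hr
  set A : ℕ → ℕ → ℂ := fun k N => binAvg r N (shiftOp^[k] x) with hA
  -- recursion
  have hrec : ∀ k N, A (k+1) (N+1) = (1 - (r:ℂ)) * A (k+1) N + (r:ℂ) * A k N := by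
    intro k N
    have : (fun n => (shiftOp^[k+1] x) (n + 1)) = shiftOp^[k] x := by
      funext n
      rw [Function.iterate_succ_apply']
      simp [shiftOp]
    simp only [hA, binAvg_succ r N (shiftOp^[k+1] x), this]
  -- A k 0 = 0 for k ≥ 1
  have hzero : ∀ k N, N < k → A k N = 0 := by
    intro k N hkN
    apply Finset.sum_eq_zero
    intro n hn
    rw [Finset.mem_range] at hn
    rw [shiftOp_iterate, if_pos (by omega), mul_zero]
  -- bound
  obtain ⟨M, hM⟩ : ∃ M, ∀ N, ‖binAvg r N x‖ ≤ M := by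
    obtain ⟨M, hM⟩ := (h.norm).bddAbove_range
    exact ⟨M, fun N => hM ⟨N, rfl⟩⟩
  have hM0 : 0 ≤ M := le_trans (norm_nonneg _) (hM 0)
  have hbound : ∀ N k, ‖A k N‖ ≤ M := by
    intro N
    induction N with
    | zero =>
      intro k
      cases k with
      | zero => simpa [hA] using hM 0
      | succ k => rw [hzero (k+1) 0 (by omega)]; simpa using hM0
    | succ N ih =>
      intro k
      cases k with
      | zero => simpa [hA] using hM (N+1)
      | succ k =>
        rw [hrec k N]
        calc ‖(1 - (r:ℂ)) * A (k+1) N + (r:ℂ) * A k N‖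
            ≤ ‖(1 - (r:ℂ)) * A (k+1) N‖ + ‖(r:ℂ) * A k N‖ := norm_add_le _ _
          _ = (1 - r) * ‖A (k+1) N‖ + r * ‖A k N‖ := by
              rw [norm_mul, norm_mul]
              congr 2
              · rw [show (1 - (r:ℂ)) = ((1 - r : ℝ) : ℂ) by push_cast; ring,
                  Complex.norm_real, Real.norm_of_nonneg (by linarith)]
              · rw [Complex.norm_real, Real.norm_of_nonneg hr0.le]
          _ ≤ (1 - r) * M + r * M := by
              apply add_le_add
              · exact mul_le_mul_of_nonneg_left (ih (k+1)) (by linarith)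
              · exact mul_le_mul_of_nonneg_left (ih k) hr0.le
          _ = M := by ring
  -- pointwise limits
  have hlim : ∀ k, Tendsto (fun N => A k N) atTop (nhds L) := by
    intro k
    induction k with
    | zero => simpa [hA] using h
    | succ k ih =>
      exact tendsto_of_rec r hr0 hr1 (fun N => A (k+1) N) (fun N => A k N) L
        (fun N => hrec k N) ih
  -- identity: binAvg of convolution equals finite sum of l k * A k N
  have hid : ∀ N, binAvg r N (fun n => ∑ k ∈ Finset.range (n + 1), l k * x (n - k))
      = ∑ k ∈ Finset.range (N + 1), l k * A k N := by
    intro N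
    unfold binAvg
    have step1 : ∀ n ∈ Finset.range (N + 1),
        (N.choose n : ℂ) * (r:ℂ)^n * ((1:ℂ)-r)^(N-n) * (∑ k ∈ Finset.range (n + 1), l k * x (n - k))
        = ∑ k ∈ Finset.range (N + 1),
            (N.choose n : ℂ) * (r:ℂ)^n * ((1:ℂ)-r)^(N-n) * (l k * (shiftOp^[k] x n)) := by
      intro n hn
      rw [Finset.mem_range] at hn
      rw [Finset.mul_sum]
      rw [← Finset.sum_subset (Finset.range_subset_range.2 (by omega) :
          Finset.range (n+1) ⊆ Finset.range (N+1))]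
      · apply Finset.sum_congr rfl
        intro k hk
        rw [Finset.mem_range] at hk
        rw [shiftOp_iterate, if_neg (by omega)]
      · intro k _ hk
        rw [Finset.mem_range, not_lt] at hk
        rw [shiftOp_iterate, if_pos (by omega), mul_zero, mul_zero]
    rw [Finset.sum_congr rfl step1, Finset.sum_comm]
    apply Finset.sum_congr rfl
    intro k _
    simp only [hA]
    unfold binAvg
    rw [Finset.mul_sum]
    apply Finset.sum_congr rfl
    intro n _
    ring
  -- rewrite as tsum
  have hid2 : ∀ N, binAvg r N (fun n => ∑ k ∈ Finset.range (n + 1), l k * x (n - k))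
      = ∑' k, l k * A k N := by
    intro N
    rw [hid N]
    exact (tsum_eq_sum (fun k hk => by
      rw [Finset.mem_range, not_lt] at hk
      rw [hzero k N (by omega), mul_zero])).symm
  simp only [hid2]
  have hLsum : L * ∑' n, l n = ∑' k, l k * L := by
    rw [tsum_mul_right, mul_comm]
  rw [hLsum]
  apply tendsto_tsum_of_dominated_convergence (bound := fun k => ‖l k‖ * M)
  · exact hl.mul_right M
  · intro k
    exact (hlim k).const_mul (l k)
  · filter_upwards with N k
    rw [norm_mul]
    exact mul_le_mul_of_nonneg_left (hbound N k) (norm_nonneg _)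
end
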